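/- Let G be a finite abelian group and F_q a field with char(F_q) ∤ |G|. For each co-cyclic subgroup H of G, the idempotent e_H is the sum of all primitive idempotents e of F_q G such that H_e = H (i.e., e·e_H = e). -/

import Mathlib

open scoped Classical

/-- `hat F H` is the element `Ĥ = (1/|H|) ∑_{h ∈ H} h` of the group algebra `F G`. -/
noncomputable def hat (F : Type) [Field F] {G : Type} [Group G] [Fintype G]
    (H : Subgroup G) : MonoidAlgebra F G :=
  (Nat.card H : F)⁻¹ • ∑ h ∈ (H : Set G).toFinset, MonoidAlgebra.single h (1 : F)

/-- The `p`-primary (Sylow) component of a commutative group `G`: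
the subgroup of elements of `p`-power order. -/
def pComp (G : Type) [CommGroup G] (p : ℕ) : Subgroup G where
  carrier := {x | ∃ n : ℕ, x ^ p ^ n = 1}
  one_mem' := ⟨0, one_pow _⟩
  mul_mem' := by
    rintro a b ⟨m, hm⟩ ⟨k, hk⟩
    refine ⟨m + k, ?_⟩
    have ha : a ^ p ^ (m + k) = 1 := by rw [pow_add, pow_mul, hm, one_pow]
    have hb : b ^ p ^ (m + k) = 1 := by rw [add_comm, pow_add, pow_mul, hk, one_pow]
    rw [mul_pow, ha, hb, one_mul]
  inv_mem' := by rintro a ⟨m, hm⟩; exact ⟨m, by rw [inv_pow, hm, inv_one]⟩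

/-- `H` is a co-cyclic subgroup of `G`: the quotient `G/H` is a nontrivial cyclic group. -/
def Cocyclic {G : Type} [CommGroup G] (H : Subgroup G) : Prop :=
  IsCyclic (G ⧸ H) ∧ Nontrivial (G ⧸ H)

/-- `K` is a co-cyclic subgroup of the subgroup `A`. -/
def CocyclicIn {G : Type} [CommGroup G] (K A : Subgroup G) : Prop :=
  K ≤ A ∧ IsCyclic (↥A ⧸ K.subgroupOf A) ∧ Nontrivial (↥A ⧸ K.subgroupOf A)

/-- `sharp` assigns to each co-cyclic subgroup `K` of a Sylow subgroup `G_p` the unique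
subgroup `K♯` with `K ≤ K♯ ≤ G_p` and `[K♯ : K] = p`. -/
def IsSharp {G : Type} [CommGroup G] [Fintype G] (sharp : Subgroup G → Subgroup G) : Prop :=
  ∀ p ∈ (Fintype.card G).primeFactors, ∀ K : Subgroup G, CocyclicIn K (pComp G p) →
    (K ≤ sharp K ∧ sharp K ≤ pComp G p ∧ K.relIndex (sharp K) = p) ∧
    ∀ L : Subgroup G, K ≤ L → L ≤ pComp G p → K.relIndex L = p → L = sharp K

/-- The idempotent `e_H` associated to a co-cyclic subgroup `H` of a finite abelian
group `G`: the product over the primes `p` dividing `|G|` of `Ĝ_p` (if `H_p = G_p`) or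
`Ĥ_p − Ĥ_p♯` (otherwise), where `H_p = H ∩ G_p` is the `p`-Sylow component of `H`. -/
noncomputable def eH (F : Type) [Field F] {G : Type} [CommGroup G] [Fintype G]
    (sharp : Subgroup G → Subgroup G) (H : Subgroup G) : MonoidAlgebra F G :=
  ∏ p ∈ (Fintype.card G).primeFactors,
    if pComp G p ⊓ H = pComp G p then hat F (pComp G p)
    else hat F (pComp G p ⊓ H) - hat F (sharp (pComp G p ⊓ H))

/-- `e` is a primitive idempotent: a nonzero idempotent which is not the sum of two
nonzero orthogonal idempotents. -/
def IsPrimIdem {R : Type} [Ring R] (e : R) : Prop :=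
  e ≠ 0 ∧ e * e = e ∧
    ∀ a b : R, a * a = a → b * b = b → a * b = 0 → b * a = 0 → e = a + b →
      a = 0 ∨ b = 0

/-!
Since `char F ∤ |G|`, Maschke's theorem makes `F G` a commutative semisimple ring, hence a
finite product of fields `∏ Kᵢ`. There an idempotent `u` is the indicator of the coordinates
with `uᵢ = 1`, the primitive idempotents are the unit vectors `δᵢ`, and `δᵢ u = δᵢ` exactly when
`uᵢ = 1`; so every idempotent is the sum of the primitive idempotents it absorbs. It remains to
see that `e_H` is idempotent: it is a product of commuting factors `Ĝ_p` or `Ĥ_p - Ĥ_p♯`, which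
are idempotent because `Ĥ_K Ĥ_L = Ĥ_L` whenever `K ≤ L`.
-/

lemma IsPrimIdem.map {R S : Type} [Ring R] [Ring S] (φ : R ≃+* S) {e : R}
    (he : IsPrimIdem e) : IsPrimIdem (φ e) := by
  obtain ⟨he0, hee, hprim⟩ := he
  refine ⟨(map_ne_zero_iff φ φ.injective).mpr he0, by rw [← map_mul, hee], ?_⟩
  intro a b haa hbb hab hba hsum
  have key := hprim (φ.symm a) (φ.symm b) (by rw [← map_mul, haa]) (by rw [← map_mul, hbb])
    (by rw [← map_mul, hab, map_zero]) (by rw [← map_mul, hba, map_zero])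
    (by rw [← map_add, ← hsum, φ.symm_apply_apply])
  simpa using key

lemma isPrimIdem_map_iff {R S : Type} [Ring R] [Ring S] (φ : R ≃+* S) {e : R} :
    IsPrimIdem (φ e) ↔ IsPrimIdem e :=
  ⟨fun h => by simpa using h.map φ.symm, IsPrimIdem.map φ⟩

namespace Pi

variable {ι : Type} {K : ι → Type} [∀ i, CommRing (K i)]

lemma single_one_mul (i : ι) (v : ∀ j, K j) : Pi.single i (1 : K i) * v = Pi.single i (v i) := by
  rw [← Pi.single_mul_left, one_mul]

variable [∀ i, IsDomain (K i)]

lemma apply_eq_zero_or_one_of_isIdempotentElem {u : ∀ i, K i} (hu : IsIdempotentElem u)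
    (i : ι) : u i = 0 ∨ u i = 1 :=
  IsIdempotentElem.iff_eq_zero_or_one.mp (hu.map (Pi.evalRingHom K i))

lemma isPrimIdem_iff {u : ∀ i, K i} : IsPrimIdem u ↔ ∃ i, u = Pi.single i 1 := by
  constructor
  · rintro ⟨hu0, huu, hprim⟩
    obtain ⟨i, hi⟩ : ∃ i, u i = 1 := by
      by_contra! h
      exact hu0 <| funext fun j =>
        (apply_eq_zero_or_one_of_isIdempotentElem huu j).resolve_right (h j)
    have hiu : Pi.single i 1 * u = Pi.single i (1 : K i) := by rw [single_one_mul, hi]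
    -- split `u` as `δ_i + (u - δ_i)`; primitivity forces the second summand to vanish
    have hrest : Pi.single i 1 * (u - Pi.single i 1) = 0 := by
      rw [mul_sub, hiu, ← Pi.single_mul, one_mul, sub_self]
    rcases hprim (Pi.single i 1) (u - Pi.single i 1) (by rw [← Pi.single_mul, one_mul])
      (IsIdempotentElem.sub (by rw [IsIdempotentElem, ← Pi.single_mul, one_mul]) huu hiu
        (by rw [mul_comm, hiu])) hrest (by rw [mul_comm, hrest]) (by ring) with h | h
    · simpa using congrFun h i
    · exact ⟨i, sub_eq_zero.mp h⟩
  · rintro ⟨i, rfl⟩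
    refine ⟨fun h => by simpa using congrFun h i,
      by rw [← Pi.single_mul, one_mul], ?_⟩
    intro a b haa hbb hab hba hsum
    -- `a = a (a + b) = a δ_i`, so `a` and likewise `b` are supported at `i`
    have ha : a = Pi.single i (a i) := by
      rw [← single_one_mul, mul_comm, hsum, mul_add, haa, hab, add_zero]
    have hb : b = Pi.single i (b i) := by
      rw [← single_one_mul, mul_comm, hsum, mul_add, hba, hbb, zero_add]
    have hab_i : a i * b i = 0 := congrFun hab i
    rcases mul_eq_zero.mp hab_i with h | h
    · left; rw [ha, h, Pi.single_zero]
    · right; rw [hb, h, Pi.single_zero]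

variable [Fintype ι]

lemma sum_single_one_eq_of_isIdempotentElem {u : ∀ i, K i} (hu : IsIdempotentElem u) :
    ∑ i with u i = 1, Pi.single i (1 : K i) = u := by
  conv_rhs => rw [← Finset.univ_sum_single u]
  rw [Finset.sum_filter]
  refine Finset.sum_congr rfl fun i _ => ?_
  rcases apply_eq_zero_or_one_of_isIdempotentElem hu i with h | h <;> simp [h]

lemma sum_isPrimIdem_mul_eq_self {u : ∀ i, K i} (hu : IsIdempotentElem u)
    (P : Finset (∀ i, K i)) (hP : ∀ x, x ∈ P ↔ IsPrimIdem x ∧ x * u = x) :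
    ∑ x ∈ P, x = u := by
  have hPeq : P = ({i | u i = 1} : Finset ι).image fun i => Pi.single i (1 : K i) := by
    ext x
    simp only [hP, isPrimIdem_iff, Finset.mem_image, Finset.mem_filter, Finset.mem_univ, true_and]
    constructor
    · rintro ⟨⟨i, rfl⟩, h⟩
      exact ⟨i, by simpa [single_one_mul] using congrFun h i, rfl⟩
    · rintro ⟨i, hi, rfl⟩
      exact ⟨⟨i, rfl⟩, by rw [single_one_mul, hi]⟩
  rw [hPeq, Finset.sum_image]
  · exact sum_single_one_eq_of_isIdempotentElem hu
  · intro i _ j _ h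
    by_contra hij
    simpa [hij] using congrFun h i

end Pi

theorem IsSemisimpleRing.sum_isPrimIdem_mul_eq_self {R : Type} [CommRing R] [IsSemisimpleRing R]
    {f : R} (hf : IsIdempotentElem f) (P : Finset R)
    (hP : ∀ x, x ∈ P ↔ IsPrimIdem x ∧ x * f = x) : ∑ x ∈ P, x = f := by
  have := Fintype.ofFinite (MaximalSpectrum R)
  let φ := (IsArtinianRing.equivPi R).toRingEquiv
  have hPφ : ∀ y, y ∈ P.map φ.toEquiv.toEmbedding ↔ IsPrimIdem y ∧ y * φ f = y := by
    intro y
    rw [Finset.mem_map_equiv, hP, ← isPrimIdem_map_iff φ, ← φ.injective.eq_iff, map_mul]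
    simp
  apply φ.injective
  rw [map_sum, ← Pi.sum_isPrimIdem_mul_eq_self (hf.map φ) _ hPφ, Finset.sum_map]
  rfl

section GroupAlgebra

open MonoidAlgebra

variable {F : Type} [Field F] {G : Type}

lemma natCast_card_subgroup_ne_zero [Group G] [Fintype G]
    (hchar : ¬ ringChar F ∣ Fintype.card G) (K : Subgroup G) : (Nat.card K : F) ≠ 0 := by
  rw [Ne, ringChar.spec]
  exact fun h => hchar (h.trans (Nat.card_eq_fintype_card (α := G) ▸ K.card_subgroup_dvd_card))

lemma single_one_mul_sum_subgroup [Group G] [Fintype G] {L : Subgroup G} {k : G} (hk : k ∈ L) :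
    single k (1 : F) * ∑ l ∈ (L : Set G).toFinset, single l 1 =
      ∑ l ∈ (L : Set G).toFinset, single l 1 := by
  rw [Finset.mul_sum]
  refine Finset.sum_equiv (Equiv.mulLeft k) (fun l => ?_) fun l _ => ?_
  · simp [L.mul_mem_cancel_left hk]
  · rw [single_mul_single, one_mul, Equiv.coe_mulLeft]

lemma hat_mul_hat_of_le [Group G] [Fintype G] {K L : Subgroup G} (hK : (Nat.card K : F) ≠ 0)
    (hKL : K ≤ L) : hat F K * hat F L = hat F L := by
  unfold hat
  rw [smul_mul_smul_comm, Finset.sum_mul,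
    Finset.sum_congr rfl fun k hk => single_one_mul_sum_subgroup (hKL (Set.mem_toFinset.mp hk)),
    Finset.sum_const, ← Nat.card_eq_card_toFinset, SetLike.coe_sort_coe,
    ← Nat.cast_smul_eq_nsmul F, smul_smul]
  congr 1
  field_simp

variable [CommGroup G]

lemma Cocyclic.cocyclicIn_inf {H : Subgroup G} (hH : Cocyclic H) {A : Subgroup G}
    (hA : A ⊓ H ≠ A) : CocyclicIn (A ⊓ H) A := by
  refine ⟨inf_le_left, ?_, ?_⟩
  · have := hH.1
    -- `A ⧸ (A ⊓ H)` is isomorphic to the image of `A` in the cyclic group `G ⧸ H`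
    let g : A →* G ⧸ H := (QuotientGroup.mk' H).comp A.subtype
    have hker : g.ker = (A ⊓ H).subgroupOf A := by
      rw [← MonoidHom.comap_ker, QuotientGroup.ker_mk', Subgroup.inf_subgroupOf_left]; rfl
    let e := (QuotientGroup.quotientMulEquivOfEq hker.symm).trans
      (QuotientGroup.quotientKerEquivRange g)
    exact isCyclic_of_surjective e.symm e.symm.surjective
  · rw [QuotientGroup.nontrivial_iff, Ne, Subgroup.subgroupOf_eq_top]
    exact fun h => hA (le_antisymm inf_le_left h)

variable [Fintype G]

lemma isIdempotentElem_hat_sub_hat {K L : Subgroup G} (hK : (Nat.card K : F) ≠ 0)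
    (hL : (Nat.card L : F) ≠ 0) (hKL : K ≤ L) : IsIdempotentElem (hat F K - hat F L) :=
  .sub (hat_mul_hat_of_le hL le_rfl) (hat_mul_hat_of_le hK le_rfl)
    (by rw [mul_comm, hat_mul_hat_of_le hK hKL]) (hat_mul_hat_of_le hK hKL)

lemma isIdempotentElem_eH (hchar : ¬ ringChar F ∣ Fintype.card G)
    {sharp : Subgroup G → Subgroup G} (hsharp : IsSharp sharp) {H : Subgroup G}
    (hH : Cocyclic H) : IsIdempotentElem (eH F sharp H) := by
  refine Finset.prod_induction _ _ (fun _ _ => IsIdempotentElem.mul) .one fun p hp => ?_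
  have hcard := natCast_card_subgroup_ne_zero (F := F) hchar
  split_ifs with hHp
  · exact hat_mul_hat_of_le (hcard _) le_rfl
  · exact isIdempotentElem_hat_sub_hat (hcard _) (hcard _)
      (hsharp p hp _ (hH.cocyclicIn_inf hHp)).1.1

end GroupAlgebra

theorem stmt13 (F : Type) [Field F] (G : Type) [CommGroup G] [Fintype G]
    (hchar : ¬ (ringChar F ∣ Fintype.card G))
    (sharp : Subgroup G → Subgroup G) (hsharp : IsSharp sharp)
    (H : Subgroup G) (hH : Cocyclic H)
    -- `P` is the (finite) set of all primitive idempotents `e` of `F G` with `Φ(e) = H`,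
    -- i.e. with `e · e_H = e`
    (P : Finset (MonoidAlgebra F G))
    (hP : ∀ x : MonoidAlgebra F G, x ∈ P ↔ (IsPrimIdem x ∧ x * eH F sharp H = x)) :
    ∑ x ∈ P, x = eH F sharp H := by
  have : NeZero (Nat.card G : F) := ⟨by rwa [Nat.card_eq_fintype_card, Ne, ringChar.spec]⟩
  exact IsSemisimpleRing.sum_isPrimIdem_mul_eq_self (isIdempotentElem_eH hchar hsharp hH) P hP
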